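/- arXiv:2207.03369 — 4 statements merged into one kernel-verified Lean document; each statement's English description precedes it below -/
import Mathlib

section
/- Let 𝒩 → ℰ →ʲ 𝒢 be a groupoid extension and k: 𝒢 → ℰ a normalized section of j. Define L_x(n) := k(x)·n·k(x)⁻¹ for x ∈ 𝒢, n ∈ N_{s(x)}, and let σ(x,y) ∈ N_{r(x)} be the unique element with k(x)k(y) = σ(x,y)·k(xy) for composable (x,y). Then (L,σ) is a factor system for (𝒢,𝒩): (F1) L_x L_y(n) = σ(x,y) L_{xy}(n) σ(x,y)⁻¹ for all composable (x,y) and n ∈ N_{s(y)}, and (F2) σ(x,y)σ(xy,z) = L_x(σ(y,z))σ(x,yz) for all composable triples (x,y,z). -/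
/-- A groupoid over a unit space `U`, with a total (junk-valued outside composables)
multiplication. `e : U → G` is the inclusion of units. -/
structure Gpd (G U : Type) where
  s : G → U
  r : G → U
  e : U → G
  mul : G → G → G
  inv : G → G
  s_e : ∀ u, s (e u) = u
  r_e : ∀ u, r (e u) = u
  e_mul : ∀ x, mul (e (r x)) x = x
  mul_e : ∀ x, mul x (e (s x)) = x
  s_inv : ∀ x, s (inv x) = r x
  r_inv : ∀ x, r (inv x) = s x
  inv_mul : ∀ x, mul (inv x) x = e (s x)
  mul_inv : ∀ x, mul x (inv x) = e (r x)
  r_mul : ∀ x y, s x = r y → r (mul x y) = r x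
  s_mul : ∀ x y, s x = r y → s (mul x y) = s y
  assoc : ∀ x y z, s x = r y → s y = r z → mul (mul x y) z = mul x (mul y z)

/-- A group bundle over `U`: a total space `N` with projection `p`, each fiber being a group
(operations are total, with group laws holding fiberwise). -/
structure GrpBundle (N U : Type) where
  p : N → U
  one : U → N
  mul : N → N → N
  inv : N → N
  p_one : ∀ u, p (one u) = u
  p_mul : ∀ n m, p n = p m → p (mul n m) = p n
  p_inv : ∀ n, p (inv n) = p n
  one_mul : ∀ n, mul (one (p n)) n = n
  mul_one : ∀ n, mul n (one (p n)) = n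
  inv_mul : ∀ n, mul (inv n) n = one (p n)
  mul_inv : ∀ n, mul n (inv n) = one (p n)
  assoc : ∀ a b c, p a = p b → p b = p c → mul (mul a b) c = mul a (mul b c)

/-- A groupoid extension `𝒩 → ℰ → 𝒢`: a surjective homomorphism `j : E → G` over the common
unit space `U`, inducing the identity on units.  The kernel (the group bundle `𝒩`) is the set
of elements of `E` mapped by `j` to a unit. -/
structure GpdExt {G U E : Type} (𝒢 : Gpd G U) (ℰ : Gpd E U) where
  j : E → G
  j_surj : Function.Surjective j
  j_mul : ∀ x y, ℰ.s x = ℰ.r y → j (ℰ.mul x y) = 𝒢.mul (j x) (j y)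
  j_inv : ∀ x, j (ℰ.inv x) = 𝒢.inv (j x)
  j_e : ∀ u, j (ℰ.e u) = 𝒢.e u
  j_s : ∀ x, 𝒢.s (j x) = ℰ.s x
  j_r : ∀ x, 𝒢.r (j x) = ℰ.r x

/-- Membership in the kernel `𝒩 = ker j`. -/
def GpdExt.inKer {G U E : Type} {𝒢 : Gpd G U} {ℰ : Gpd E U} (ext : GpdExt 𝒢 ℰ) (a : E) : Prop :=
  ∃ u, ext.j a = 𝒢.e u

/-!
All computations take place in `ℰ`.  The element `σ(x,y) = k(x)k(y)k(xy)⁻¹` lies in the kernel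
because `j` sends it to `xy(xy)⁻¹`, and `k(x)k(y) = σ(x,y)k(xy)` by cancellation.  (F1) is
conjugation by the element `k(x)k(y) = σ(x,y)k(xy)` read in two ways.  For (F2), both sides
multiplied on the right by `k(xyz)` reduce to `k(x)k(y)k(z)`, so they agree by right cancellation
in `ℰ`.
-/

namespace Gpd

variable {G U : Type} (𝒢 : Gpd G U)

def conj (a n : G) : G := 𝒢.mul (𝒢.mul a n) (𝒢.inv a)

theorem mul_e_of_s_eq {x : G} {u : U} (h : 𝒢.s x = u) : 𝒢.mul x (𝒢.e u) = x :=
  h ▸ 𝒢.mul_e x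

theorem e_mul_of_r_eq {x : G} {u : U} (h : 𝒢.r x = u) : 𝒢.mul (𝒢.e u) x = x :=
  h ▸ 𝒢.e_mul x

theorem inv_e (u : U) : 𝒢.inv (𝒢.e u) = 𝒢.e u :=
  calc 𝒢.inv (𝒢.e u) = 𝒢.mul (𝒢.e u) (𝒢.inv (𝒢.e u)) :=
        (𝒢.e_mul_of_r_eq (by rw [r_inv, s_e])).symm
    _ = 𝒢.e u := by rw [mul_inv, r_e]

theorem s_mul_inv {x y : G} (h : 𝒢.s x = 𝒢.s y) :
    𝒢.s (𝒢.mul x (𝒢.inv y)) = 𝒢.r y := by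
  rw [𝒢.s_mul _ _ (h.trans (𝒢.r_inv y).symm), s_inv]

theorem mul_inv_mul_cancel {x y : G} (h : 𝒢.s x = 𝒢.s y) :
    𝒢.mul (𝒢.mul x (𝒢.inv y)) y = x := by
  rw [𝒢.assoc _ _ _ (h.trans (𝒢.r_inv y).symm) (𝒢.s_inv y), inv_mul, 𝒢.mul_e_of_s_eq h]

theorem mul_mul_inv_cancel {x y : G} (h : 𝒢.s x = 𝒢.r y) :
    𝒢.mul (𝒢.mul x y) (𝒢.inv y) = x := by
  rw [𝒢.assoc _ _ _ h (𝒢.r_inv y).symm, mul_inv, 𝒢.mul_e_of_s_eq h]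

theorem inv_mul_cancel_left {x y : G} (h : 𝒢.s x = 𝒢.r y) :
    𝒢.mul (𝒢.inv x) (𝒢.mul x y) = y := by
  rw [← 𝒢.assoc _ _ _ (𝒢.s_inv x) h, inv_mul, 𝒢.e_mul_of_r_eq h.symm]

theorem mul_right_cancel {x y z : G} (hx : 𝒢.s x = 𝒢.r z) (hy : 𝒢.s y = 𝒢.r z)
    (h : 𝒢.mul x z = 𝒢.mul y z) : x = y := by
  rw [← 𝒢.mul_mul_inv_cancel hx, h, 𝒢.mul_mul_inv_cancel hy]

theorem inv_mul_rev {x y : G} (h : 𝒢.s x = 𝒢.r y) :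
    𝒢.inv (𝒢.mul x y) = 𝒢.mul (𝒢.inv y) (𝒢.inv x) := by
  have hyx : 𝒢.s (𝒢.inv y) = 𝒢.r (𝒢.inv x) := by rw [s_inv, r_inv, h]
  refine 𝒢.mul_right_cancel (z := 𝒢.mul x y) (𝒢.s_inv _)
    (by rw [𝒢.s_mul _ _ hyx, s_inv, 𝒢.r_mul _ _ h]) ?_
  rw [inv_mul, 𝒢.assoc _ _ _ hyx (by rw [s_inv, 𝒢.r_mul _ _ h]), 𝒢.inv_mul_cancel_left h,
    inv_mul, 𝒢.s_mul _ _ h]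

theorem s_conj {a n : G} (han : 𝒢.s a = 𝒢.r n) (hn : 𝒢.s n = 𝒢.s a) :
    𝒢.s (𝒢.conj a n) = 𝒢.r a :=
  𝒢.s_mul_inv ((𝒢.s_mul _ _ han).trans hn)

theorem conj_e {n : G} {u : U} (hr : 𝒢.r n = u) (hs : 𝒢.s n = u) :
    𝒢.conj (𝒢.e u) n = n := by
  rw [conj, inv_e, 𝒢.e_mul_of_r_eq hr, 𝒢.mul_e_of_s_eq hs]

theorem conj_conj {a b n : G} (hab : 𝒢.s a = 𝒢.r b) (hbn : 𝒢.s b = 𝒢.r n)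
    (hn : 𝒢.s n = 𝒢.s b) : 𝒢.conj a (𝒢.conj b n) = 𝒢.conj (𝒢.mul a b) n := by
  have hsbn : 𝒢.s (𝒢.mul b n) = 𝒢.s b := (𝒢.s_mul b n hbn).trans hn
  have hrbn : 𝒢.r (𝒢.mul b n) = 𝒢.r b := 𝒢.r_mul b n hbn
  rw [conj, conj, conj, 𝒢.inv_mul_rev hab, 𝒢.assoc a b n hab hbn,
    ← 𝒢.assoc _ (𝒢.inv b) (𝒢.inv a)
      (by rw [𝒢.s_mul _ _ (hab.trans hrbn.symm), hsbn, r_inv]) (by rw [s_inv, r_inv, hab]),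
    𝒢.assoc a (𝒢.mul b n) (𝒢.inv b) (hab.trans hrbn.symm) (by rw [hsbn, r_inv])]

theorem conj_mul {a n b : G} (han : 𝒢.s a = 𝒢.r n) (hn : 𝒢.s n = 𝒢.s a)
    (hab : 𝒢.s a = 𝒢.r b) :
    𝒢.mul (𝒢.conj a n) (𝒢.mul a b) = 𝒢.mul (𝒢.mul a n) b := by
  rw [conj, 𝒢.assoc _ _ _ (by rw [𝒢.s_mul _ _ han, hn, r_inv])
    (by rw [s_inv, 𝒢.r_mul _ _ hab]), 𝒢.inv_mul_cancel_left hab]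

end Gpd

def sectionCocycle {G U E : Type} (𝒢 : Gpd G U) (ℰ : Gpd E U) (k : G → E) (x y : G) : E :=
  ℰ.mul (ℰ.mul (k x) (k y)) (ℰ.inv (k (𝒢.mul x y)))

namespace GpdExt

variable {G U E : Type} {𝒢 : Gpd G U} {ℰ : Gpd E U} (ext : GpdExt 𝒢 ℰ) {k : G → E}

theorem r_eq_s_of_inKer {n : E} (hn : ext.inKer n) : ℰ.r n = ℰ.s n := by
  obtain ⟨u, hu⟩ := hn
  rw [← ext.j_s, ← ext.j_r, hu, 𝒢.s_e, 𝒢.r_e]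

theorem j_mul_of_inKer {a n : E} (han : ℰ.s a = ℰ.r n) (hn : ext.inKer n) :
    ext.j (ℰ.mul a n) = ext.j a := by
  obtain ⟨u, hu⟩ := hn
  rw [ext.j_mul _ _ han, hu, 𝒢.mul_e_of_s_eq (by rw [ext.j_s, han, ← ext.j_r, hu, 𝒢.r_e])]

theorem inKer_mul_inv {a b : E} (hs : ℰ.s a = ℰ.s b) (hj : ext.j a = ext.j b) :
    ext.inKer (ℰ.mul a (ℰ.inv b)) :=
  ⟨𝒢.r (ext.j b), by
    rw [ext.j_mul _ _ (hs.trans (ℰ.r_inv b).symm), ext.j_inv, hj, 𝒢.mul_inv]⟩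

theorem inKer_conj {a n : E} (hn : ext.inKer n) (hs : ℰ.s n = ℰ.s a) :
    ext.inKer (ℰ.conj a n) := by
  have han : ℰ.s a = ℰ.r n := by rw [ext.r_eq_s_of_inKer hn, hs]
  exact ext.inKer_mul_inv (by rw [ℰ.s_mul _ _ han, hs]) (ext.j_mul_of_inKer han hn)

theorem s_conj_of_inKer {a n : E} (hn : ext.inKer n) (hs : ℰ.s n = ℰ.s a) :
    ℰ.s (ℰ.conj a n) = ℰ.r a :=
  ℰ.s_conj (by rw [ext.r_eq_s_of_inKer hn, hs]) hs

theorem s_section (hk : ∀ x, ext.j (k x) = x) (x : G) : ℰ.s (k x) = 𝒢.s x := by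
  rw [← ext.j_s, hk]

theorem r_section (hk : ∀ x, ext.j (k x) = x) (x : G) : ℰ.r (k x) = 𝒢.r x := by
  rw [← ext.j_r, hk]

theorem s_section_eq_r_section (hk : ∀ x, ext.j (k x) = x) {x y : G} (h : 𝒢.s x = 𝒢.r y) :
    ℰ.s (k x) = ℰ.r (k y) := by
  rw [ext.s_section hk, ext.r_section hk, h]

theorem s_mul_section_eq_s_section (hk : ∀ x, ext.j (k x) = x) {x y : G}
    (h : 𝒢.s x = 𝒢.r y) :
    ℰ.s (ℰ.mul (k x) (k y)) = ℰ.s (k (𝒢.mul x y)) := by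
  rw [ℰ.s_mul _ _ (ext.s_section_eq_r_section hk h), ext.s_section hk, ext.s_section hk,
    𝒢.s_mul _ _ h]

theorem inKer_sectionCocycle (hk : ∀ x, ext.j (k x) = x) {x y : G} (h : 𝒢.s x = 𝒢.r y) :
    ext.inKer (sectionCocycle 𝒢 ℰ k x y) :=
  ext.inKer_mul_inv (ext.s_mul_section_eq_s_section hk h)
    (by rw [ext.j_mul _ _ (ext.s_section_eq_r_section hk h), hk, hk, hk])

theorem s_sectionCocycle (hk : ∀ x, ext.j (k x) = x) {x y : G} (h : 𝒢.s x = 𝒢.r y) :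
    ℰ.s (sectionCocycle 𝒢 ℰ k x y) = 𝒢.r x := by
  rw [sectionCocycle, ℰ.s_mul_inv (ext.s_mul_section_eq_s_section hk h), ext.r_section hk,
    𝒢.r_mul _ _ h]

theorem r_sectionCocycle (hk : ∀ x, ext.j (k x) = x) {x y : G} (h : 𝒢.s x = 𝒢.r y) :
    ℰ.r (sectionCocycle 𝒢 ℰ k x y) = 𝒢.r x := by
  rw [ext.r_eq_s_of_inKer (ext.inKer_sectionCocycle hk h), ext.s_sectionCocycle hk h]

theorem sectionCocycle_mul_section (hk : ∀ x, ext.j (k x) = x) {x y : G}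
    (h : 𝒢.s x = 𝒢.r y) :
    ℰ.mul (sectionCocycle 𝒢 ℰ k x y) (k (𝒢.mul x y)) = ℰ.mul (k x) (k y) :=
  ℰ.mul_inv_mul_cancel (ext.s_mul_section_eq_s_section hk h)

theorem sectionCocycle_e_left (hk : ∀ x, ext.j (k x) = x) (hk0 : ∀ u, k (𝒢.e u) = ℰ.e u)
    (x : G) : sectionCocycle 𝒢 ℰ k (𝒢.e (𝒢.r x)) x = ℰ.e (𝒢.r x) := by
  rw [sectionCocycle, hk0, 𝒢.e_mul, ℰ.e_mul_of_r_eq (ext.r_section hk x), ℰ.mul_inv,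
    ext.r_section hk]

theorem sectionCocycle_e_right (hk : ∀ x, ext.j (k x) = x) (hk0 : ∀ u, k (𝒢.e u) = ℰ.e u)
    (x : G) : sectionCocycle 𝒢 ℰ k x (𝒢.e (𝒢.s x)) = ℰ.e (𝒢.r x) := by
  rw [sectionCocycle, hk0, 𝒢.mul_e, ℰ.mul_e_of_s_eq (ext.s_section hk x), ℰ.mul_inv,
    ext.r_section hk]

theorem inKer_conj_section (hk : ∀ x, ext.j (k x) = x) {x : G} {n : E} (hn : ext.inKer n)
    (hs : ℰ.s n = 𝒢.s x) : ext.inKer (ℰ.conj (k x) n) :=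
  ext.inKer_conj hn (hs.trans (ext.s_section hk x).symm)

theorem s_conj_section (hk : ∀ x, ext.j (k x) = x) {x : G} {n : E} (hn : ext.inKer n)
    (hs : ℰ.s n = 𝒢.s x) : ℰ.s (ℰ.conj (k x) n) = 𝒢.r x :=
  (ext.s_conj_of_inKer hn (hs.trans (ext.s_section hk x).symm)).trans (ext.r_section hk x)

theorem conj_section_e (hk0 : ∀ u, k (𝒢.e u) = ℰ.e u) {u : U} {n : E} (hn : ext.inKer n)
    (hs : ℰ.s n = u) : ℰ.conj (k (𝒢.e u)) n = n := by
  rw [hk0, ℰ.conj_e ((ext.r_eq_s_of_inKer hn).trans hs) hs]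

theorem conj_section_conj_section (hk : ∀ x, ext.j (k x) = x) {x y : G} (h : 𝒢.s x = 𝒢.r y)
    {n : E} (hn : ext.inKer n) (hs : ℰ.s n = 𝒢.s y) :
    ℰ.conj (k x) (ℰ.conj (k y) n) =
      ℰ.conj (sectionCocycle 𝒢 ℰ k x y) (ℰ.conj (k (𝒢.mul x y)) n) := by
  have hr : ℰ.r n = 𝒢.s y := (ext.r_eq_s_of_inKer hn).trans hs
  rw [ℰ.conj_conj (ext.s_section_eq_r_section hk h) (by rw [ext.s_section hk, hr])
      (by rw [hs, ext.s_section hk]),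
    ← ext.sectionCocycle_mul_section hk h,
    ℰ.conj_conj (by rw [ext.s_sectionCocycle hk h, ext.r_section hk, 𝒢.r_mul _ _ h])
      (by rw [ext.s_section hk, 𝒢.s_mul _ _ h, hr])
      (by rw [hs, ext.s_section hk, 𝒢.s_mul _ _ h])]

theorem sectionCocycle_mul_sectionCocycle_mul_section (hk : ∀ x, ext.j (k x) = x) {x y z : G}
    (hxy : 𝒢.s x = 𝒢.r y) (hyz : 𝒢.s y = 𝒢.r z) :
    ℰ.mul (ℰ.mul (sectionCocycle 𝒢 ℰ k x y) (sectionCocycle 𝒢 ℰ k (𝒢.mul x y) z))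
        (k (𝒢.mul (𝒢.mul x y) z)) = ℰ.mul (ℰ.mul (k x) (k y)) (k z) := by
  have hxy_z : 𝒢.s (𝒢.mul x y) = 𝒢.r z := (𝒢.s_mul _ _ hxy).trans hyz
  rw [ℰ.assoc _ _ _
      (by rw [ext.s_sectionCocycle hk hxy, ext.r_sectionCocycle hk hxy_z, 𝒢.r_mul _ _ hxy])
      (by rw [ext.s_sectionCocycle hk hxy_z, ext.r_section hk, 𝒢.r_mul _ _ hxy_z]),
    ext.sectionCocycle_mul_section hk hxy_z,
    ← ℰ.assoc _ _ _ (by rw [ext.s_sectionCocycle hk hxy, ext.r_section hk, 𝒢.r_mul _ _ hxy])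
      (ext.s_section_eq_r_section hk hxy_z),
    ext.sectionCocycle_mul_section hk hxy]

theorem conj_sectionCocycle_mul_sectionCocycle_mul_section
    (hk : ∀ x, ext.j (k x) = x) {x y z : G} (hxy : 𝒢.s x = 𝒢.r y) (hyz : 𝒢.s y = 𝒢.r z) :
    ℰ.mul (ℰ.mul (ℰ.conj (k x) (sectionCocycle 𝒢 ℰ k y z))
        (sectionCocycle 𝒢 ℰ k x (𝒢.mul y z))) (k (𝒢.mul x (𝒢.mul y z))) =
      ℰ.mul (ℰ.mul (k x) (k y)) (k z) := by
  have hx_yz : 𝒢.s x = 𝒢.r (𝒢.mul y z) := hxy.trans (𝒢.r_mul _ _ hyz).symm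
  have hσ : ℰ.s (k x) = ℰ.r (sectionCocycle 𝒢 ℰ k y z) := by
    rw [ext.s_section hk, ext.r_sectionCocycle hk hyz, hxy]
  have hσs : ℰ.s (sectionCocycle 𝒢 ℰ k y z) = ℰ.s (k x) := by
    rw [ext.s_sectionCocycle hk hyz, ext.s_section hk, hxy]
  rw [ℰ.assoc _ _ _
      (by rw [ℰ.s_conj hσ hσs, ext.r_sectionCocycle hk hx_yz, ext.r_section hk])
      (by rw [ext.s_sectionCocycle hk hx_yz, ext.r_section hk, 𝒢.r_mul _ _ hx_yz]),
    ext.sectionCocycle_mul_section hk hx_yz,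
    ℰ.conj_mul hσ hσs (ext.s_section_eq_r_section hk hx_yz),
    ℰ.assoc _ _ _ hσ (by rw [ext.s_sectionCocycle hk hyz, ext.r_section hk, 𝒢.r_mul _ _ hyz]),
    ext.sectionCocycle_mul_section hk hyz,
    ℰ.assoc _ _ _ (ext.s_section_eq_r_section hk hxy) (ext.s_section_eq_r_section hk hyz)]

theorem sectionCocycle_mul_sectionCocycle (hk : ∀ x, ext.j (k x) = x) {x y z : G}
    (hxy : 𝒢.s x = 𝒢.r y) (hyz : 𝒢.s y = 𝒢.r z) :
    ℰ.mul (sectionCocycle 𝒢 ℰ k x y) (sectionCocycle 𝒢 ℰ k (𝒢.mul x y) z) =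
      ℰ.mul (ℰ.conj (k x) (sectionCocycle 𝒢 ℰ k y z))
        (sectionCocycle 𝒢 ℰ k x (𝒢.mul y z)) := by
  have hxy_z : 𝒢.s (𝒢.mul x y) = 𝒢.r z := (𝒢.s_mul _ _ hxy).trans hyz
  have hx_yz : 𝒢.s x = 𝒢.r (𝒢.mul y z) := hxy.trans (𝒢.r_mul _ _ hyz).symm
  have hr : ℰ.r (k (𝒢.mul (𝒢.mul x y) z)) = 𝒢.r x := by
    rw [ext.r_section hk, 𝒢.r_mul _ _ hxy_z, 𝒢.r_mul _ _ hxy]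
  have hlhs : ℰ.s (sectionCocycle 𝒢 ℰ k x y) = ℰ.r (sectionCocycle 𝒢 ℰ k (𝒢.mul x y) z) := by
    rw [ext.s_sectionCocycle hk hxy, ext.r_sectionCocycle hk hxy_z, 𝒢.r_mul _ _ hxy]
  have hrhs : ℰ.s (ℰ.conj (k x) (sectionCocycle 𝒢 ℰ k y z)) =
      ℰ.r (sectionCocycle 𝒢 ℰ k x (𝒢.mul y z)) := by
    rw [ext.s_conj_section hk (ext.inKer_sectionCocycle hk hyz)
      ((ext.s_sectionCocycle hk hyz).trans hxy.symm), ext.r_sectionCocycle hk hx_yz]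
  refine ℰ.mul_right_cancel (z := k (𝒢.mul (𝒢.mul x y) z))
    (by rw [ℰ.s_mul _ _ hlhs, ext.s_sectionCocycle hk hxy_z, 𝒢.r_mul _ _ hxy, hr])
    (by rw [ℰ.s_mul _ _ hrhs, ext.s_sectionCocycle hk hx_yz, hr]) ?_
  rw [ext.sectionCocycle_mul_sectionCocycle_mul_section hk hxy hyz, 𝒢.assoc _ _ _ hxy hyz,
    ext.conj_sectionCocycle_mul_sectionCocycle_mul_section hk hxy hyz]

end GpdExt

/-- Let `𝒩 → ℰ → 𝒢` be a groupoid extension and `k` a normalized section of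
`j`.  Define `L_x(n) = k(x) n k(x)⁻¹` and `σ(x,y) = k(x) k(y) k(xy)⁻¹`.  Then `(L,σ)` is a
factor system for `(𝒢,𝒩)`: `σ(x,y)` lies in the kernel fiber over `r(x)`, `k(x)k(y) =
σ(x,y)k(xy)`, `L_x` maps the kernel fiber over `s(x)` to the one over `r(x)`, `(L,σ)` is
normalized on units, and (F1), (F2) hold. -/
theorem stmt1 {G U E : Type} (𝒢 : Gpd G U) (ℰ : Gpd E U) (ext : GpdExt 𝒢 ℰ)
    (k : G → E) (hk : ∀ x, ext.j (k x) = x) (hk0 : ∀ u, k (𝒢.e u) = ℰ.e u)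
    (L : G → E → E) (hL : ∀ x n, L x n = ℰ.mul (ℰ.mul (k x) n) (ℰ.inv (k x)))
    (σ : G → G → E)
    (hσ : ∀ x y, σ x y = ℰ.mul (ℰ.mul (k x) (k y)) (ℰ.inv (k (𝒢.mul x y)))) :
    -- σ(x,y) ∈ N_{r(x)} and k(x)k(y) = σ(x,y)·k(xy)
    (∀ x y, 𝒢.s x = 𝒢.r y → ext.inKer (σ x y) ∧ ℰ.s (σ x y) = 𝒢.r x ∧
        ℰ.mul (k x) (k y) = ℰ.mul (σ x y) (k (𝒢.mul x y))) ∧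
    -- L_x maps N_{s(x)} into N_{r(x)}
    (∀ x n, ext.inKer n → ℰ.s n = 𝒢.s x → ext.inKer (L x n) ∧ ℰ.s (L x n) = 𝒢.r x) ∧
    -- normalization
    (∀ x, σ (𝒢.e (𝒢.r x)) x = ℰ.e (𝒢.r x)) ∧
    (∀ x, σ x (𝒢.e (𝒢.s x)) = ℰ.e (𝒢.r x)) ∧
    (∀ u n, ext.inKer n → ℰ.s n = u → L (𝒢.e u) n = n) ∧
    -- (F1) twisted action condition
    (∀ x y n, 𝒢.s x = 𝒢.r y → ext.inKer n → ℰ.s n = 𝒢.s y →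
        L x (L y n) = ℰ.mul (ℰ.mul (σ x y) (L (𝒢.mul x y) n)) (ℰ.inv (σ x y))) ∧
    -- (F2) twisted cocycle condition
    (∀ x y z, 𝒢.s x = 𝒢.r y → 𝒢.s y = 𝒢.r z →
        ℰ.mul (σ x y) (σ (𝒢.mul x y) z) = ℰ.mul (L x (σ y z)) (σ x (𝒢.mul y z))) := by
  obtain rfl : L = fun x => ℰ.conj (k x) := funext fun x => funext (hL x)
  obtain rfl : σ = sectionCocycle 𝒢 ℰ k := funext fun x => funext (hσ x)
  refine ⟨fun x y h => ⟨ext.inKer_sectionCocycle hk h, ext.s_sectionCocycle hk h,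
      (ext.sectionCocycle_mul_section hk h).symm⟩,
    fun x n hn hs => ⟨ext.inKer_conj_section hk hn hs, ext.s_conj_section hk hn hs⟩,
    ext.sectionCocycle_e_left hk hk0, ext.sectionCocycle_e_right hk hk0,
    fun u n hn hs => ext.conj_section_e hk0 hn hs,
    fun x y n h hn hs => ext.conj_section_conj_section hk h hn hs,
    fun x y z hxy hyz => ext.sectionCocycle_mul_sectionCocycle hk hxy hyz⟩
end

section
/- Let (L,σ) be a factor system for (𝒢,𝒩). Then the set 𝒩 ×_(p,r) 𝒢 = {(n,x) : p(n) = r(x)} becomes a groupoid with unit space identified with 𝒢⁽⁰⁾, where s(n,x) = s(x), r(n,x) = r(x), the product is (n,x)(m,y) = (n·L_x(m)·σ(x,y), xy) when s(x) = r(y), and the inverse is (n,x)⁻¹ = (σ(x⁻¹,x)⁻¹·L_{x⁻¹}(n⁻¹), x⁻¹). In particular, the product is associative and (n,x)(n,x)⁻¹ = (1_{r(x)}, r(x)) and (n,x)⁻¹(n,x) = (1_{s(x)}, s(x)). -/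
/-- A pair `(L, σ)` satisfying all the conditions of a factor system for `(𝒢, 𝒩)` except
possibly the twisted cocycle condition (F2): `L` is a family of fiberwise group isomorphisms
`L x : N_{s x} → N_{r x}`, trivial on units, and `σ : 𝒢⁽²⁾ → 𝒩` is normalized with
`σ (x, y) ∈ N_{r x}`, satisfying the twisted action condition (F1). -/
structure PreFS {G U N : Type} (𝒢 : Gpd G U) (𝒩 : GrpBundle N U) where
  L : G → N → N
  σ : G → G → N
  L_fib : ∀ x n, 𝒩.p n = 𝒢.s x → 𝒩.p (L x n) = 𝒢.r x
  L_mul : ∀ x n m, 𝒩.p n = 𝒢.s x → 𝒩.p m = 𝒢.s x →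
    L x (𝒩.mul n m) = 𝒩.mul (L x n) (L x m)
  L_bij : ∀ x, Set.BijOn (L x) {n | 𝒩.p n = 𝒢.s x} {n | 𝒩.p n = 𝒢.r x}
  L_e : ∀ u n, 𝒩.p n = u → L (𝒢.e u) n = n
  σ_fib : ∀ x y, 𝒢.s x = 𝒢.r y → 𝒩.p (σ x y) = 𝒢.r x
  σ_e_left : ∀ x, σ (𝒢.e (𝒢.r x)) x = 𝒩.one (𝒢.r x)
  σ_e_right : ∀ x, σ x (𝒢.e (𝒢.s x)) = 𝒩.one (𝒢.r x)
  F1 : ∀ x y n, 𝒢.s x = 𝒢.r y → 𝒩.p n = 𝒢.s y →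
    L x (L y n) = 𝒩.mul (𝒩.mul (σ x y) (L (𝒢.mul x y) n)) (𝒩.inv (σ x y))

/-- A factor system `(L, σ)` for `(𝒢, 𝒩)`: conditions (F1) and (F2). -/
structure FS {G U N : Type} (𝒢 : Gpd G U) (𝒩 : GrpBundle N U) extends PreFS 𝒢 𝒩 where
  F2 : ∀ x y z, 𝒢.s x = 𝒢.r y → 𝒢.s y = 𝒢.r z →
    𝒩.mul (σ x y) (σ (𝒢.mul x y) z) = 𝒩.mul (L x (σ y z)) (σ x (𝒢.mul y z))

variable {G U N : Type}

/-- The product `(n,x)(m,y) = (n ⬝ L_x(m) ⬝ σ(x,y), xy)` on `𝒩 ×_(L,σ) 𝒢`. -/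
def pmul (𝒢 : Gpd G U) (𝒩 : GrpBundle N U) (L : G → N → N) (σ : G → G → N)
    (q q' : N × G) : N × G :=
  (𝒩.mul (𝒩.mul q.1 (L q.2 q'.1)) (σ q.2 q'.2), 𝒢.mul q.2 q'.2)

/-- The inverse `(n,x)⁻¹ = (σ(x⁻¹,x)⁻¹ ⬝ L_{x⁻¹}(n⁻¹), x⁻¹)` on `𝒩 ×_(L,σ) 𝒢`. -/
def pinv (𝒢 : Gpd G U) (𝒩 : GrpBundle N U) (L : G → N → N) (σ : G → G → N)
    (q : N × G) : N × G :=
  (𝒩.mul (𝒩.inv (σ (𝒢.inv q.2) q.2)) (L (𝒢.inv q.2) (𝒩.inv q.1)), 𝒢.inv q.2)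

/-!
Every fiber of `𝒩` is a group and every `L x` is a group isomorphism `N_{s x} → N_{r x}`, so
each law reduces to a word identity in the single fiber `N_{r x}`. For associativity, after
expanding `L_x` on a product the two sides differ exactly by `L_x L_y (l)` versus
`σ(x,y) L_{xy}(l) σ(x,y)⁻¹` (F1) and `L_x(σ(y,z)) σ(x,yz)` versus `σ(x,y) σ(xy,z)` (F2).
For the inverse, (F2) at `(x, x⁻¹, x)` with the normalization of `σ` gives
`σ(x,x⁻¹) = L_x(σ(x⁻¹,x))`, and (F1) at `(x, x⁻¹)` makes `L_x L_{x⁻¹}` conjugation by `σ(x,x⁻¹)`.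
-/

namespace GrpBundle

section

variable {𝒩 : GrpBundle N U} {u : U}

lemma p_mul_of_p_eq {a b : N} (ha : 𝒩.p a = u) (hb : 𝒩.p b = u) : 𝒩.p (𝒩.mul a b) = u :=
  (𝒩.p_mul a b (ha.trans hb.symm)).trans ha

lemma one_mul_of_p_eq {n : N} (h : 𝒩.p n = u) : 𝒩.mul (𝒩.one u) n = n :=
  h ▸ 𝒩.one_mul n

lemma mul_one_of_p_eq {n : N} (h : 𝒩.p n = u) : 𝒩.mul n (𝒩.one u) = n :=
  h ▸ 𝒩.mul_one n

end

variable (𝒩 : GrpBundle N U)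

abbrev Fib (u : U) : Type := {n : N // 𝒩.p n = u}

instance (u : U) : Group (𝒩.Fib u) where
  mul a b := ⟨𝒩.mul a.1 b.1, p_mul_of_p_eq a.2 b.2⟩
  one := ⟨𝒩.one u, 𝒩.p_one u⟩
  inv a := ⟨𝒩.inv a.1, (𝒩.p_inv a.1).trans a.2⟩
  mul_assoc a b c := Subtype.ext (𝒩.assoc _ _ _ (a.2.trans b.2.symm) (b.2.trans c.2.symm))
  one_mul := by rintro ⟨a, rfl⟩; exact Subtype.ext (𝒩.one_mul a)
  mul_one := by rintro ⟨a, rfl⟩; exact Subtype.ext (𝒩.mul_one a)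
  inv_mul_cancel := by rintro ⟨a, rfl⟩; exact Subtype.ext (𝒩.inv_mul a)

end GrpBundle

section

variable {𝒢 : Gpd G U} {𝒩 : GrpBundle N U}

lemma pmul_mk (L : G → N → N) (σ : G → G → N) (n m : N) (x y : G) :
    pmul 𝒢 𝒩 L σ (n, x) (m, y) = (𝒩.mul (𝒩.mul n (L x m)) (σ x y), 𝒢.mul x y) := rfl

lemma pinv_mk (L : G → N → N) (σ : G → G → N) (n : N) (x : G) :
    pinv 𝒢 𝒩 L σ (n, x) = (𝒩.mul (𝒩.inv (σ (𝒢.inv x) x)) (L (𝒢.inv x) (𝒩.inv n)), 𝒢.inv x) :=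
  rfl

end

namespace PreFS

variable {𝒢 : Gpd G U} {𝒩 : GrpBundle N U} (F : PreFS 𝒢 𝒩)

def fibHom (x : G) : 𝒩.Fib (𝒢.s x) →* 𝒩.Fib (𝒢.r x) :=
  MonoidHom.mk' (fun a => ⟨F.L x a, F.L_fib x a a.2⟩)
    fun a b => Subtype.ext (F.L_mul x a b a.2 b.2)

lemma L_one (x : G) : F.L x (𝒩.one (𝒢.s x)) = 𝒩.one (𝒢.r x) :=
  congrArg Subtype.val (map_one (F.fibHom x))

lemma L_inv {x : G} {n : N} (hn : 𝒩.p n = 𝒢.s x) : F.L x (𝒩.inv n) = 𝒩.inv (F.L x n) :=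
  congrArg Subtype.val (map_inv (F.fibHom x) (⟨n, hn⟩ : 𝒩.Fib (𝒢.s x)))

lemma L_L_inv {n : N} {x : G} (hn : 𝒩.p n = 𝒢.r x) :
    F.L x (F.L (𝒢.inv x) n) =
      𝒩.mul (𝒩.mul (F.σ x (𝒢.inv x)) n) (𝒩.inv (F.σ x (𝒢.inv x))) := by
  rw [F.F1 x (𝒢.inv x) n (𝒢.r_inv x).symm (hn.trans (𝒢.s_inv x).symm), 𝒢.mul_inv,
    F.L_e _ _ hn]

lemma p_pmul_fst {n m : N} {x y : G} (hn : 𝒩.p n = 𝒢.r x) (hm : 𝒩.p m = 𝒢.r y)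
    (hxy : 𝒢.s x = 𝒢.r y) : 𝒩.p (pmul 𝒢 𝒩 F.L F.σ (n, x) (m, y)).1 = 𝒢.r (𝒢.mul x y) := by
  rw [𝒢.r_mul x y hxy]
  exact 𝒩.p_mul_of_p_eq (𝒩.p_mul_of_p_eq hn (F.L_fib x m (hm.trans hxy.symm)))
    (F.σ_fib x y hxy)

lemma p_pinv_fst {n : N} {x : G} (hn : 𝒩.p n = 𝒢.r x) :
    𝒩.p (pinv 𝒢 𝒩 F.L F.σ (n, x)).1 = 𝒢.r (𝒢.inv x) :=
  𝒩.p_mul_of_p_eq ((𝒩.p_inv _).trans (F.σ_fib _ _ (𝒢.s_inv x)))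
    (F.L_fib _ _ (by rw [𝒩.p_inv, hn, 𝒢.s_inv]))

lemma one_pmul {n : N} {x : G} (hn : 𝒩.p n = 𝒢.r x) :
    pmul 𝒢 𝒩 F.L F.σ (𝒩.one (𝒢.r x), 𝒢.e (𝒢.r x)) (n, x) = (n, x) := by
  rw [pmul_mk, F.L_e _ _ hn, F.σ_e_left, 𝒢.e_mul, 𝒩.one_mul_of_p_eq hn,
    𝒩.mul_one_of_p_eq hn]

lemma pmul_one {n : N} {x : G} (hn : 𝒩.p n = 𝒢.r x) :
    pmul 𝒢 𝒩 F.L F.σ (n, x) (𝒩.one (𝒢.s x), 𝒢.e (𝒢.s x)) = (n, x) := by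
  rw [pmul_mk, F.L_one, F.σ_e_right, 𝒢.mul_e, 𝒩.mul_one_of_p_eq hn, 𝒩.mul_one_of_p_eq hn]

lemma pinv_pmul_self {n : N} {x : G} (hn : 𝒩.p n = 𝒢.r x) :
    pmul 𝒢 𝒩 F.L F.σ (pinv 𝒢 𝒩 F.L F.σ (n, x)) (n, x) = (𝒩.one (𝒢.s x), 𝒢.e (𝒢.s x)) := by
  have hn' : 𝒩.p n = 𝒢.s (𝒢.inv x) := hn.trans (𝒢.s_inv x).symm
  rw [pinv_mk, pmul_mk, F.L_inv hn', 𝒢.inv_mul, ← 𝒢.r_inv x]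
  let S : 𝒩.Fib (𝒢.r (𝒢.inv x)) := ⟨F.σ (𝒢.inv x) x, F.σ_fib _ _ (𝒢.s_inv x)⟩
  let C : 𝒩.Fib (𝒢.r (𝒢.inv x)) := ⟨F.L (𝒢.inv x) n, F.L_fib _ _ hn'⟩
  have h : S⁻¹ * C⁻¹ * C * S = 1 := by group
  exact Prod.ext (congrArg Subtype.val h) rfl

end PreFS

namespace FS

variable {𝒢 : Gpd G U} {𝒩 : GrpBundle N U} (F : FS 𝒢 𝒩)

lemma σ_inv_right (x : G) : F.σ x (𝒢.inv x) = F.L x (F.σ (𝒢.inv x) x) := by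
  have h := F.F2 x (𝒢.inv x) x (𝒢.r_inv x).symm (𝒢.s_inv x)
  rwa [𝒢.mul_inv, 𝒢.inv_mul, F.σ_e_left, F.σ_e_right,
    𝒩.mul_one_of_p_eq (F.σ_fib _ _ (𝒢.r_inv x).symm),
    𝒩.mul_one_of_p_eq (F.L_fib _ _ ((F.σ_fib _ _ (𝒢.s_inv x)).trans (𝒢.r_inv x)))] at h

lemma pmul_pinv_self {n : N} {x : G} (hn : 𝒩.p n = 𝒢.r x) :
    pmul 𝒢 𝒩 F.L F.σ (n, x) (pinv 𝒢 𝒩 F.L F.σ (n, x)) = (𝒩.one (𝒢.r x), 𝒢.e (𝒢.r x)) := by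
  have hσ : 𝒩.p (F.σ (𝒢.inv x) x) = 𝒢.s x := (F.σ_fib _ _ (𝒢.s_inv x)).trans (𝒢.r_inv x)
  have hn' : 𝒩.p (𝒩.inv n) = 𝒢.s (𝒢.inv x) := by rw [𝒩.p_inv, hn, 𝒢.s_inv]
  have hL : 𝒩.p (F.L (𝒢.inv x) (𝒩.inv n)) = 𝒢.s x := (F.L_fib _ _ hn').trans (𝒢.r_inv x)
  rw [pinv_mk, pmul_mk, F.L_mul x _ _ ((𝒩.p_inv _).trans hσ) hL, F.L_inv hσ,
    ← F.σ_inv_right, F.L_L_inv ((𝒩.p_inv n).trans hn), 𝒢.mul_inv]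
  let A : 𝒩.Fib (𝒢.r x) := ⟨n, hn⟩
  let S : 𝒩.Fib (𝒢.r x) := ⟨F.σ x (𝒢.inv x), F.σ_fib _ _ (𝒢.r_inv x).symm⟩
  have h : A * (S⁻¹ * (S * A⁻¹ * S⁻¹)) * S = 1 := by group
  exact Prod.ext (congrArg Subtype.val h) rfl

lemma pmul_assoc {n m l : N} {x y z : G} (hn : 𝒩.p n = 𝒢.r x) (hm : 𝒩.p m = 𝒢.r y)
    (hl : 𝒩.p l = 𝒢.r z) (hxy : 𝒢.s x = 𝒢.r y) (hyz : 𝒢.s y = 𝒢.r z) :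
    pmul 𝒢 𝒩 F.L F.σ (pmul 𝒢 𝒩 F.L F.σ (n, x) (m, y)) (l, z) =
      pmul 𝒢 𝒩 F.L F.σ (n, x) (pmul 𝒢 𝒩 F.L F.σ (m, y) (l, z)) := by
  have hm' : 𝒩.p m = 𝒢.s x := hm.trans hxy.symm
  have hl' : 𝒩.p l = 𝒢.s y := hl.trans hyz.symm
  have hLyl : 𝒩.p (F.L y l) = 𝒢.s x := (F.L_fib y l hl').trans hxy.symm
  have hσyz : 𝒩.p (F.σ y z) = 𝒢.s x := (F.σ_fib y z hyz).trans hxy.symm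
  have hrxy : 𝒢.r (𝒢.mul x y) = 𝒢.r x := 𝒢.r_mul x y hxy
  have hsxy : 𝒢.s (𝒢.mul x y) = 𝒢.r z := (𝒢.s_mul x y hxy).trans hyz
  simp only [pmul_mk]
  rw [F.L_mul x _ _ (𝒩.p_mul_of_p_eq hm' hLyl) hσyz, F.L_mul x _ _ hm' hLyl,
    𝒢.assoc x y z hxy hyz]
  let a : 𝒩.Fib (𝒢.r x) := ⟨n, hn⟩
  let b : 𝒩.Fib (𝒢.r x) := ⟨F.L x m, F.L_fib x m hm'⟩
  let c : 𝒩.Fib (𝒢.r x) := ⟨F.σ x y, F.σ_fib x y hxy⟩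
  let d : 𝒩.Fib (𝒢.r x) :=
    ⟨F.L (𝒢.mul x y) l, (F.L_fib _ l (hl'.trans (𝒢.s_mul x y hxy).symm)).trans hrxy⟩
  let e : 𝒩.Fib (𝒢.r x) := ⟨F.σ (𝒢.mul x y) z, (F.σ_fib _ _ hsxy).trans hrxy⟩
  let f : 𝒩.Fib (𝒢.r x) := ⟨F.L x (F.L y l), F.L_fib x _ hLyl⟩
  let g : 𝒩.Fib (𝒢.r x) := ⟨F.L x (F.σ y z), F.L_fib x _ hσyz⟩
  let h : 𝒩.Fib (𝒢.r x) :=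
    ⟨F.σ x (𝒢.mul y z), F.σ_fib x _ (hxy.trans (𝒢.r_mul y z hyz).symm)⟩
  have hF1 : f = c * d * c⁻¹ := Subtype.ext (F.F1 x y l hxy hl')
  have hF2 : h = g⁻¹ * (c * e) := eq_inv_mul_of_mul_eq (Subtype.ext (F.F2 x y z hxy hyz)).symm
  have key : a * b * c * d * e = a * (b * f * g) * h := by rw [hF1, hF2]; group
  exact Prod.ext (congrArg Subtype.val key) rfl

end FS

/-- For a factor system `(L,σ)` for `(𝒢,𝒩)`, the set
`𝒩 ×_(p,r) 𝒢 = {(n,x) : p n = r x}` becomes a groupoid over `𝒢⁽⁰⁾` with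
`s(n,x) = s x`, `r(n,x) = r x`, product `(n,x)(m,y) = (n L_x(m) σ(x,y), xy)` and inverse
`(n,x)⁻¹ = (σ(x⁻¹,x)⁻¹ L_{x⁻¹}(n⁻¹), x⁻¹)`: the product of composable valid pairs is a valid
pair, units act as units, the product is associative, and the inverse laws hold. -/
theorem stmt2 {G U N : Type} (𝒢 : Gpd G U) (𝒩 : GrpBundle N U) (F : FS 𝒢 𝒩) :
    -- closure: the product of valid composable pairs is valid, with the expected range/source
    (∀ n x m y, 𝒩.p n = 𝒢.r x → 𝒩.p m = 𝒢.r y → 𝒢.s x = 𝒢.r y →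
      𝒩.p (pmul 𝒢 𝒩 F.L F.σ (n, x) (m, y)).1 = 𝒢.r (𝒢.mul x y) ∧
      𝒢.r (pmul 𝒢 𝒩 F.L F.σ (n, x) (m, y)).2 = 𝒢.r x ∧
      𝒢.s (pmul 𝒢 𝒩 F.L F.σ (n, x) (m, y)).2 = 𝒢.s y) ∧
    -- closure of the inverse
    (∀ n x, 𝒩.p n = 𝒢.r x →
      𝒩.p (pinv 𝒢 𝒩 F.L F.σ (n, x)).1 = 𝒢.r (𝒢.inv x)) ∧
    -- unit laws
    (∀ n x, 𝒩.p n = 𝒢.r x →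
      pmul 𝒢 𝒩 F.L F.σ (𝒩.one (𝒢.r x), 𝒢.e (𝒢.r x)) (n, x) = (n, x) ∧
      pmul 𝒢 𝒩 F.L F.σ (n, x) (𝒩.one (𝒢.s x), 𝒢.e (𝒢.s x)) = (n, x)) ∧
    -- associativity
    (∀ n x m y l z, 𝒩.p n = 𝒢.r x → 𝒩.p m = 𝒢.r y → 𝒩.p l = 𝒢.r z →
      𝒢.s x = 𝒢.r y → 𝒢.s y = 𝒢.r z →
      pmul 𝒢 𝒩 F.L F.σ (pmul 𝒢 𝒩 F.L F.σ (n, x) (m, y)) (l, z) =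
        pmul 𝒢 𝒩 F.L F.σ (n, x) (pmul 𝒢 𝒩 F.L F.σ (m, y) (l, z))) ∧
    -- inverse laws
    (∀ n x, 𝒩.p n = 𝒢.r x →
      pmul 𝒢 𝒩 F.L F.σ (n, x) (pinv 𝒢 𝒩 F.L F.σ (n, x)) =
        (𝒩.one (𝒢.r x), 𝒢.e (𝒢.r x)) ∧
      pmul 𝒢 𝒩 F.L F.σ (pinv 𝒢 𝒩 F.L F.σ (n, x)) (n, x) =
        (𝒩.one (𝒢.s x), 𝒢.e (𝒢.s x))) :=
  ⟨fun _ x _ y hn hm hxy => ⟨F.p_pmul_fst hn hm hxy, 𝒢.r_mul x y hxy, 𝒢.s_mul x y hxy⟩,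
    fun _ _ hn => F.p_pinv_fst hn,
    fun _ _ hn => ⟨F.one_pmul hn, F.pmul_one hn⟩,
    fun _ _ _ _ _ _ hn hm hl hxy hyz => F.pmul_assoc hn hm hl hxy hyz,
    fun _ _ hn => ⟨F.pmul_pinv_self hn, F.pinv_pmul_self hn⟩⟩
end

section
/- Let (L,σ) and (L,σ') be two factor systems for (𝒢,𝒩) with the same L. Then for every composable pair (x,y), the element σ(x,y)⁻¹σ'(x,y) lies in the center Z(N_{r(x)}), and the map σ⁻¹·σ' is a 2-cocycle in Z²(𝒢, Z(𝒩))_L for the Abelian groupoid cohomology of 𝒢 with coefficients in the center bundle Z(𝒩) with module structure induced by L. -/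
/-!
By (F1) for `σ` and for `σ'`, conjugation by `σ(x,y)` and by `σ'(x,y)` agree on the image of
`L_{xy}`, which is all of `N_{r x}`; hence `σ(x,y)⁻¹σ'(x,y)` is central. The cocycle identity is
the quotient of the two instances of (F2) in the group `N_{r x}`, where the central factors
`σ⁻¹σ'` and `L_x(σ⁻¹σ')` can be moved freely.
-/

open Subgroup

lemma inv_mul_mem_center_of_conj_eq {H : Type*} [Group H] {s s' : H}
    (h : ∀ m, s * m * s⁻¹ = s' * m * s'⁻¹) : s⁻¹ * s' ∈ center H := by
  refine mem_center_iff.mpr fun m => ?_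
  calc m * (s⁻¹ * s') = s⁻¹ * (s * m * s⁻¹) * s' := by group
    _ = s⁻¹ * (s' * m * s'⁻¹) * s' := by rw [h]
    _ = s⁻¹ * s' * m := by group

lemma map_mem_center_of_surjective {H K : Type*} [Group H] [Group K] {f : H →* K}
    (hf : Function.Surjective f) {z : H} (hz : z ∈ center H) : f z ∈ center K := by
  refine mem_center_iff.mpr fun g => ?_
  obtain ⟨g, rfl⟩ := hf g
  rw [← map_mul, ← map_mul, mem_center_iff.mp hz]

lemma inv_mul_mul_inv_mul_eq_of_mem_center {H : Type*} [Group H] {a a' b b' c c' d d' : H}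
    (hα : a⁻¹ * a' ∈ center H) (hγ : c⁻¹ * c' ∈ center H)
    (h : a * b = c * d) (h' : a' * b' = c' * d') :
    c⁻¹ * c' * (d⁻¹ * d') = a⁻¹ * a' * (b⁻¹ * b') :=
  calc c⁻¹ * c' * (d⁻¹ * d') = d⁻¹ * (c⁻¹ * c') * d' := by
        rw [← mul_assoc, ← mem_center_iff.mp hγ]
    _ = (c * d)⁻¹ * (c' * d') := by group
    _ = (a * b)⁻¹ * (a' * b') := by rw [h, h']
    _ = b⁻¹ * (a⁻¹ * a') * b' := by group
    _ = a⁻¹ * a' * (b⁻¹ * b') := by rw [mem_center_iff.mp hα, mul_assoc]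

namespace GrpBundle

variable {N U : Type} (𝒩 : GrpBundle N U)

def Fiber (u : U) : Type := {n : N // 𝒩.p n = u}

instance (u : U) : Group (𝒩.Fiber u) where
  mul a b := ⟨𝒩.mul a.1 b.1, by rw [𝒩.p_mul _ _ (a.2.trans b.2.symm), a.2]⟩
  one := ⟨𝒩.one u, 𝒩.p_one u⟩
  inv a := ⟨𝒩.inv a.1, (𝒩.p_inv a.1).trans a.2⟩
  mul_assoc a b c := Subtype.ext (𝒩.assoc a.1 b.1 c.1 (a.2.trans b.2.symm) (b.2.trans c.2.symm))
  one_mul a := Subtype.ext (by have := 𝒩.one_mul a.1; rwa [a.2] at this)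
  mul_one a := Subtype.ext (by have := 𝒩.mul_one a.1; rwa [a.2] at this)
  inv_mul_cancel a := Subtype.ext (by have := 𝒩.inv_mul a.1; rwa [a.2] at this)

end GrpBundle

namespace PreFS

variable {G U N : Type} {𝒢 : Gpd G U} {𝒩 : GrpBundle N U} (P P' : PreFS 𝒢 𝒩)

/-- The fibers are indexed by arbitrary units `u = s x`, `v = r x`, so that no transport along
equalities of units is ever needed (likewise in `σAt`). -/
def fiberHom (x : G) {u v : U} (hu : 𝒢.s x = u) (hv : 𝒢.r x = v) : 𝒩.Fiber u →* 𝒩.Fiber v :=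
  MonoidHom.mk' (fun n => ⟨P.L x n.1, (P.L_fib x n.1 (n.2.trans hu.symm)).trans hv⟩)
    fun n m => Subtype.ext (P.L_mul x _ _ (n.2.trans hu.symm) (m.2.trans hu.symm))

lemma fiberHom_surjective (x : G) {u v : U} (hu : 𝒢.s x = u) (hv : 𝒢.r x = v) :
    Function.Surjective (P.fiberHom x hu hv) := by
  rintro ⟨m, hm⟩
  obtain ⟨n, hn, rfl⟩ := (P.L_bij x).surjOn (show 𝒩.p m = 𝒢.r x from hm.trans hv.symm)
  exact ⟨⟨n, hn.trans hu⟩, rfl⟩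

variable {P P'} in
lemma fiberHom_congr (hL : P'.L = P.L) (x : G) {u v : U} (hu : 𝒢.s x = u) (hv : 𝒢.r x = v) :
    P'.fiberHom x hu hv = P.fiberHom x hu hv :=
  MonoidHom.ext fun n => Subtype.ext (congrFun (congrFun hL x) n.1)

def σAt {x y : G} (h : 𝒢.s x = 𝒢.r y) {u : U} (hu : 𝒢.r x = u) : 𝒩.Fiber u :=
  ⟨P.σ x y, (P.σ_fib x y h).trans hu⟩

lemma fiberHom_fiberHom {x y : G} (h : 𝒢.s x = 𝒢.r y) {u : U} (hu : 𝒢.r x = u)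
    (n : 𝒩.Fiber (𝒢.s y)) :
    P.fiberHom x h hu (P.fiberHom y rfl rfl n) =
      P.σAt h hu * P.fiberHom (𝒢.mul x y) (𝒢.s_mul x y h) ((𝒢.r_mul x y h).trans hu) n *
        (P.σAt h hu)⁻¹ :=
  Subtype.ext (P.F1 x y n.1 h n.2)

def σDiff {x y : G} (h : 𝒢.s x = 𝒢.r y) {u : U} (hu : 𝒢.r x = u) : 𝒩.Fiber u :=
  (P.σAt h hu)⁻¹ * P'.σAt h hu

variable {P'} in
lemma σDiff_mem_center (hL : P'.L = P.L) {x y : G} (h : 𝒢.s x = 𝒢.r y) {u : U}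
    (hu : 𝒢.r x = u) : P.σDiff P' h hu ∈ center (𝒩.Fiber u) := by
  refine inv_mul_mem_center_of_conj_eq fun m => ?_
  obtain ⟨n, rfl⟩ := P.fiberHom_surjective (𝒢.mul x y) (𝒢.s_mul x y h)
    ((𝒢.r_mul x y h).trans hu) m
  rw [← P.fiberHom_fiberHom, ← fiberHom_congr hL, ← fiberHom_congr hL y, P'.fiberHom_fiberHom,
    fiberHom_congr hL]

end PreFS

namespace FS

variable {G U N : Type} {𝒢 : Gpd G U} {𝒩 : GrpBundle N U} (F F' : FS 𝒢 𝒩)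

lemma σAt_mul_σAt {x y z : G} (hxy : 𝒢.s x = 𝒢.r y) (hyz : 𝒢.s y = 𝒢.r z) {u : U}
    (hu : 𝒢.r x = u) :
    F.σAt hxy hu * F.σAt ((𝒢.s_mul x y hxy).trans hyz) ((𝒢.r_mul x y hxy).trans hu) =
      F.fiberHom x hxy hu (F.σAt hyz rfl) *
        F.σAt (hxy.trans (𝒢.r_mul y z hyz).symm) hu :=
  Subtype.ext (F.F2 x y z hxy hyz)

variable {F'} in
lemma σDiff_cocycle (hL : F'.L = F.L) {x y z : G} (hxy : 𝒢.s x = 𝒢.r y)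
    (hyz : 𝒢.s y = 𝒢.r z) {u : U} (hu : 𝒢.r x = u) :
    F.fiberHom x hxy hu (F.σDiff F'.toPreFS hyz rfl) *
        F.σDiff F'.toPreFS (hxy.trans (𝒢.r_mul y z hyz).symm) hu =
      F.σDiff F'.toPreFS hxy hu *
        F.σDiff F'.toPreFS ((𝒢.s_mul x y hxy).trans hyz) ((𝒢.r_mul x y hxy).trans hu) := by
  have hγ := map_mem_center_of_surjective (F.fiberHom_surjective x hxy hu)
    (F.σDiff_mem_center hL hyz rfl)
  rw [PreFS.σDiff, map_mul, map_inv] at hγ ⊢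
  refine inv_mul_mul_inv_mul_eq_of_mem_center (F.σDiff_mem_center hL hxy hu) hγ
    (F.σAt_mul_σAt hxy hyz hu) ?_
  rw [← PreFS.fiberHom_congr hL]
  exact F'.σAt_mul_σAt hxy hyz hu

end FS

/-- Let `(L,σ)` and `(L,σ')` be factor systems for `(𝒢,𝒩)` with the same `L`.
Then `σ(x,y)⁻¹σ'(x,y)` is central in the fiber `N_{r x}` for every composable `(x,y)`, and
`σ⁻¹·σ'` is a 2-cocycle for the Abelian groupoid cohomology with coefficients in the center
bundle `Z(𝒩)` with module structure induced by `L`. -/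
theorem stmt9 {G U N : Type} (𝒢 : Gpd G U) (𝒩 : GrpBundle N U) (F F' : FS 𝒢 𝒩)
    (hL : F'.L = F.L) :
    -- centrality
    (∀ x y, 𝒢.s x = 𝒢.r y → ∀ m, 𝒩.p m = 𝒢.r x →
      𝒩.mul (𝒩.mul (𝒩.inv (F.σ x y)) (F'.σ x y)) m =
        𝒩.mul m (𝒩.mul (𝒩.inv (F.σ x y)) (F'.σ x y))) ∧
    -- normalization of the 2-cochain σ⁻¹·σ'
    (∀ x, 𝒩.mul (𝒩.inv (F.σ (𝒢.e (𝒢.r x)) x)) (F'.σ (𝒢.e (𝒢.r x)) x) = 𝒩.one (𝒢.r x)) ∧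
    (∀ x, 𝒩.mul (𝒩.inv (F.σ x (𝒢.e (𝒢.s x)))) (F'.σ x (𝒢.e (𝒢.s x))) = 𝒩.one (𝒢.r x)) ∧
    (∀ x y, 𝒢.s x = 𝒢.r y →
      𝒩.p (𝒩.mul (𝒩.inv (F.σ x y)) (F'.σ x y)) = 𝒢.r x) ∧
    -- the 2-cocycle identity: L_x(ρ(y,z)) ρ(x,yz) = ρ(x,y) ρ(xy,z)
    (∀ x y z, 𝒢.s x = 𝒢.r y → 𝒢.s y = 𝒢.r z →
      𝒩.mul (F.L x (𝒩.mul (𝒩.inv (F.σ y z)) (F'.σ y z)))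
          (𝒩.mul (𝒩.inv (F.σ x (𝒢.mul y z))) (F'.σ x (𝒢.mul y z))) =
        𝒩.mul (𝒩.mul (𝒩.inv (F.σ x y)) (F'.σ x y))
          (𝒩.mul (𝒩.inv (F.σ (𝒢.mul x y) z)) (F'.σ (𝒢.mul x y) z))) := by
  
  refine ⟨fun x y h m hm => ?_, fun x => ?_, fun x => ?_, fun x y h => (F.σDiff F'.toPreFS h rfl).2,
    fun x y z hxy hyz => congrArg Subtype.val (F.σDiff_cocycle hL hxy hyz rfl)⟩
  · exact congrArg Subtype.val
      (mem_center_iff.mp (F.σDiff_mem_center hL h rfl) ⟨m, hm⟩).symm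
  · rw [F.σ_e_left, F'.σ_e_left]
    exact congrArg Subtype.val (inv_mul_cancel (1 : 𝒩.Fiber (𝒢.r x)))
  · rw [F.σ_e_right, F'.σ_e_right]
    exact congrArg Subtype.val (inv_mul_cancel (1 : 𝒩.Fiber (𝒢.r x)))
end

section
/- Let 𝒢 be a groupoid, ℛ a unital ring bundle over 𝒢⁽⁰⁾, and (M,τ) a factor system for (𝒢,ℛ). Then the set ℛ ×_(M,τ) 𝒢 of finitely supported functions f: 𝒢 → ℛ with p∘f = r, equipped with pointwise addition and the product (fg)(z) = Σ_{xy=z} f(x)M_x(g(y))τ(x,y), is an associative ring. -/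
/-- Transport along an equality of base points of a bundle of types. -/
def tr {U : Type} (Rf : U → Type) {u v : U} (h : u = v) (a : Rf u) : Rf v := h ▸ a

/-- A factor system `(M,τ)` for `(𝒢,ℛ)`, where `ℛ` is the unital ring bundle with fibers
`Rf u`: `M_x : R_{s x} → R_{r x}` are ring isomorphisms which are trivial on units, and
`τ(x,y) ∈ R_{r x}ˣ` is normalized and satisfies the conditions (C1) and (C2). -/
structure RingFS {G U : Type} (𝒢 : Gpd G U) (Rf : U → Type) [∀ u, Ring (Rf u)] where
  M : (x : G) → Rf (𝒢.s x) → Rf (𝒢.r x)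
  τ : (x y : G) → Rf (𝒢.r x)
  τinv : (x y : G) → Rf (𝒢.r x)
  M_add : ∀ x a b, M x (a + b) = M x a + M x b
  M_mul : ∀ x a b, M x (a * b) = M x a * M x b
  M_one : ∀ x, M x 1 = 1
  M_bij : ∀ x, Function.Bijective (M x)
  M_e : ∀ u a, M (𝒢.e u) a = tr Rf ((𝒢.s_e u).trans (𝒢.r_e u).symm) a
  τ_mul_τinv : ∀ x y, 𝒢.s x = 𝒢.r y → τ x y * τinv x y = 1
  τinv_mul_τ : ∀ x y, 𝒢.s x = 𝒢.r y → τinv x y * τ x y = 1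
  τ_e_left : ∀ x, τ (𝒢.e (𝒢.r x)) x = 1
  τ_e_right : ∀ x, τ x (𝒢.e (𝒢.s x)) = 1
  C1 : ∀ x y (h : 𝒢.s x = 𝒢.r y) (n : Rf (𝒢.s y)),
    M x (tr Rf h.symm (M y n)) =
      τ x y * tr Rf (𝒢.r_mul x y h) (M (𝒢.mul x y) (tr Rf (𝒢.s_mul x y h).symm n)) * τinv x y
  C2 : ∀ x y z (hxy : 𝒢.s x = 𝒢.r y) (hyz : 𝒢.s y = 𝒢.r z),
    τ x y * tr Rf (𝒢.r_mul x y hxy) (τ (𝒢.mul x y) z) =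
      M x (tr Rf hxy.symm (τ y z)) * τ x (𝒢.mul y z)

/-- The crossed-product multiplication on finitely supported sections
`f : (x : G) → R_{r x}`: `(fg)(z) = ∑_{xy=z} f(x) M_x(g(y)) τ(x,y)`. -/
noncomputable def cpMul {G U : Type} (𝒢 : Gpd G U) (Rf : U → Type) [∀ u, Ring (Rf u)]
    (M : (x : G) → Rf (𝒢.s x) → Rf (𝒢.r x)) (τ : (x y : G) → Rf (𝒢.r x))
    (f g : (x : G) → Rf (𝒢.r x)) : (z : G) → Rf (𝒢.r z) :=
  fun z => ∑ᶠ (q : G × G) (h : 𝒢.s q.1 = 𝒢.r q.2 ∧ 𝒢.mul q.1 q.2 = z),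
    tr Rf ((𝒢.r_mul q.1 q.2 h.1).symm.trans (congrArg 𝒢.r h.2))
      (f q.1 * M q.1 (tr Rf h.1.symm (g q.2)) * τ q.1 q.2)

/-! Both triple products expand into finite sums over triples `(x, y, w)` taken from the
supports of the three sections, and the two sums agree term by term. For a composable triple
this is associativity of the product of monomials `(a δ_x) (b δ_y) = (a M_x(b) τ(x,y)) δ_{xy}`:
(C1) gives `τ(x,y) M_{xy}(c) = M_x(M_y(c)) τ(x,y)`, and (C2) replaces `τ(x,y) τ(xy,w)` by
`M_x(τ(y,w)) τ(x,yw)`, after which multiplicativity of `M_x` identifies the two terms.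
Non-composable triples contribute zero on both sides. -/

section Transport

variable {U : Type} (Rf : U → Type) {u v w : U}

theorem tr_tr (h₁ : u = v) (h₂ : v = w) (a : Rf u) :
    tr Rf h₂ (tr Rf h₁ a) = tr Rf (h₁.trans h₂) a := by
  subst h₁ h₂; rfl

theorem tr_self (h : u = u) (a : Rf u) : tr Rf h a = a :=
  rfl

theorem tr_mul [∀ u, Mul (Rf u)] (h : u = v) (a b : Rf u) :
    tr Rf h (a * b) = tr Rf h a * tr Rf h b := by
  subst h; rfl

theorem tr_add [∀ u, Add (Rf u)] (h : u = v) (a b : Rf u) :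
    tr Rf h (a + b) = tr Rf h a + tr Rf h b := by
  subst h; rfl

theorem tr_zero [∀ u, Zero (Rf u)] (h : u = v) : tr Rf h (0 : Rf u) = 0 := by
  subst h; rfl

theorem tr_tr_mul [∀ u, Mul (Rf u)] (h₁ : u = v) (h₂ : v = w) (a : Rf u) (b : Rf v) :
    tr Rf h₂ (tr Rf h₁ a * b) = tr Rf (h₁.trans h₂) (a * tr Rf h₁.symm b) := by
  subst h₁ h₂; rfl

end Transport

namespace RingFS

variable {G U : Type} {𝒢 : Gpd G U} {Rf : U → Type} [∀ u, Ring (Rf u)] (F : RingFS 𝒢 Rf)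

theorem M_zero (x : G) : F.M x 0 = 0 :=
  (AddMonoidHom.mk' (F.M x) (F.M_add x)).map_zero

theorem τ_mul_M_mul {x y : G} (hxy : 𝒢.s x = 𝒢.r y) (n : Rf (𝒢.s y)) :
    F.τ x y * tr Rf (𝒢.r_mul x y hxy) (F.M (𝒢.mul x y) (tr Rf (𝒢.s_mul x y hxy).symm n)) =
      F.M x (tr Rf hxy.symm (F.M y n)) * F.τ x y := by
  rw [F.C1 x y hxy n, mul_assoc, mul_assoc, F.τinv_mul_τ x y hxy, mul_one]

def twistedMul {x y : G} (hxy : 𝒢.s x = 𝒢.r y) (a : Rf (𝒢.r x)) (b : Rf (𝒢.r y)) :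
    Rf (𝒢.r (𝒢.mul x y)) :=
  tr Rf (𝒢.r_mul x y hxy).symm (a * F.M x (tr Rf hxy.symm b) * F.τ x y)

variable {x y w : G}

theorem twistedMul_add_left (hxy : 𝒢.s x = 𝒢.r y) (a a' : Rf (𝒢.r x)) (b : Rf (𝒢.r y)) :
    F.twistedMul hxy (a + a') b = F.twistedMul hxy a b + F.twistedMul hxy a' b := by
  rw [twistedMul, add_mul, add_mul, tr_add]; rfl

theorem twistedMul_add_right (hxy : 𝒢.s x = 𝒢.r y) (a : Rf (𝒢.r x)) (b b' : Rf (𝒢.r y)) :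
    F.twistedMul hxy a (b + b') = F.twistedMul hxy a b + F.twistedMul hxy a b' := by
  rw [twistedMul, tr_add, F.M_add, mul_add, add_mul, tr_add]; rfl

theorem twistedMul_zero_left (hxy : 𝒢.s x = 𝒢.r y) (b : Rf (𝒢.r y)) :
    F.twistedMul hxy 0 b = 0 := by
  rw [twistedMul, zero_mul, zero_mul, tr_zero]

theorem twistedMul_zero_right (hxy : 𝒢.s x = 𝒢.r y) (a : Rf (𝒢.r x)) :
    F.twistedMul hxy a 0 = 0 := by
  rw [twistedMul, tr_zero, M_zero, mul_zero, zero_mul, tr_zero]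

theorem twistedMul_assoc (hxy : 𝒢.s x = 𝒢.r y) (hyw : 𝒢.s y = 𝒢.r w)
    (a : Rf (𝒢.r x)) (b : Rf (𝒢.r y)) (c : Rf (𝒢.r w)) :
    tr Rf (congrArg 𝒢.r (𝒢.assoc x y w hxy hyw))
        (F.twistedMul ((𝒢.s_mul x y hxy).trans hyw) (F.twistedMul hxy a b) c) =
      F.twistedMul (hxy.trans (𝒢.r_mul y w hyw).symm) a (F.twistedMul hyw b c) := by
  simp only [twistedMul, tr_tr]
  rw [mul_assoc (tr Rf _ _), tr_tr_mul]
  refine congrArg (tr Rf _) ?_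
  simp only [tr_mul, F.M_mul, mul_assoc]
  -- route `c` through `R_{s y}`, the fibre in which (C1) takes its argument
  rw [← mul_assoc (F.τ x y), ← tr_tr Rf hyw.symm (𝒢.s_mul x y hxy).symm c, F.τ_mul_M_mul hxy,
    mul_assoc, F.C2 x y w hxy hyw]

end RingFS

section CrossedProduct

open Function

variable {G U : Type} {𝒢 : Gpd G U} {Rf : U → Type} [∀ u, Ring (Rf u)] (F : RingFS 𝒢 Rf)

open scoped Classical in
noncomputable def cpTerm (f g : (x : G) → Rf (𝒢.r x)) (z : G) (q : G × G) : Rf (𝒢.r z) :=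
  if h : 𝒢.s q.1 = 𝒢.r q.2 ∧ 𝒢.mul q.1 q.2 = z then
    tr Rf (congrArg 𝒢.r h.2) (F.twistedMul h.1 (f q.1) (g q.2))
  else 0

variable {F}

theorem cpTerm_eq_zero_of_not {f g : (x : G) → Rf (𝒢.r x)} {z : G} {q : G × G}
    (hq : ¬(𝒢.s q.1 = 𝒢.r q.2 ∧ 𝒢.mul q.1 q.2 = z)) : cpTerm F f g z q = 0 :=
  dif_neg hq

theorem cpTerm_eq_zero_of_mul_ne {f g : (x : G) → Rf (𝒢.r x)} {z : G} {q : G × G}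
    (hq : 𝒢.mul q.1 q.2 ≠ z) : cpTerm F f g z q = 0 :=
  cpTerm_eq_zero_of_not fun h => hq h.2

theorem cpTerm_eq_zero_of_left {f g : (x : G) → Rf (𝒢.r x)} {z : G} {q : G × G}
    (hf : f q.1 = 0) : cpTerm F f g z q = 0 := by
  unfold cpTerm
  split_ifs <;> simp only [hf, F.twistedMul_zero_left, tr_zero]

theorem cpTerm_eq_zero_of_right {f g : (x : G) → Rf (𝒢.r x)} {z : G} {q : G × G}
    (hg : g q.2 = 0) : cpTerm F f g z q = 0 := by
  unfold cpTerm
  split_ifs <;> simp only [hg, F.twistedMul_zero_right, tr_zero]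

variable (F)

theorem cpTerm_add_left (f f' g : (x : G) → Rf (𝒢.r x)) (z : G) (q : G × G) :
    cpTerm F (f + f') g z q = cpTerm F f g z q + cpTerm F f' g z q := by
  unfold cpTerm
  split_ifs
  · rw [Pi.add_apply, F.twistedMul_add_left, tr_add]
  · rw [add_zero]

theorem cpTerm_add_right (f g g' : (x : G) → Rf (𝒢.r x)) (z : G) (q : G × G) :
    cpTerm F f (g + g') z q = cpTerm F f g z q + cpTerm F f g' z q := by
  unfold cpTerm
  split_ifs
  · rw [Pi.add_apply, F.twistedMul_add_right, tr_add]
  · rw [add_zero]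

theorem cpTerm_sum_left {ι : Type} (s : Finset ι) (f : ι → (x : G) → Rf (𝒢.r x))
    (g : (x : G) → Rf (𝒢.r x)) (z : G) (q : G × G) :
    cpTerm F (∑ i ∈ s, f i) g z q = ∑ i ∈ s, cpTerm F (f i) g z q :=
  map_sum (AddMonoidHom.mk' (fun f => cpTerm F f g z q) fun f f' => cpTerm_add_left F f f' g z q)
    f s

theorem cpTerm_sum_right {ι : Type} (s : Finset ι) (f : (x : G) → Rf (𝒢.r x))
    (g : ι → (x : G) → Rf (𝒢.r x)) (z : G) (q : G × G) :
    cpTerm F f (∑ i ∈ s, g i) z q = ∑ i ∈ s, cpTerm F f (g i) z q :=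
  map_sum (AddMonoidHom.mk' (fun g => cpTerm F f g z q) fun g g' => cpTerm_add_right F f g g' z q)
    g s

theorem support_cpTerm_subset (f g : (x : G) → Rf (𝒢.r x)) (z : G) :
    support (cpTerm F f g z) ⊆ {x | f x ≠ 0} ×ˢ {y | g y ≠ 0} :=
  fun _ hq => ⟨fun hf => hq (cpTerm_eq_zero_of_left hf), fun hg => hq (cpTerm_eq_zero_of_right hg)⟩

theorem cpMul_apply_eq_finsum (f g : (x : G) → Rf (𝒢.r x)) (z : G) :
    cpMul 𝒢 Rf F.M F.τ f g z = ∑ᶠ q, cpTerm F f g z q := by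
  classical
  refine finsum_congr fun q => ?_
  rw [finsum_eq_dif, cpTerm]
  split_ifs
  · rw [RingFS.twistedMul, tr_tr]
  · rfl

theorem cpMul_eq_sum {f g : (x : G) → Rf (𝒢.r x)} {s t : Finset G}
    (hs : {x | f x ≠ 0} ⊆ s) (ht : {y | g y ≠ 0} ⊆ t) :
    cpMul 𝒢 Rf F.M F.τ f g = ∑ q ∈ s ×ˢ t, fun z => cpTerm F f g z q := by
  funext z
  rw [cpMul_apply_eq_finsum, Finset.sum_apply]
  refine finsum_eq_sum_of_support_subset _ ((support_cpTerm_subset F f g z).trans ?_)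
  rw [Finset.coe_product]
  exact Set.prod_mono hs ht

theorem cpMul_support_subset [DecidableEq G] {f g : (x : G) → Rf (𝒢.r x)} {s t : Finset G}
    (hs : {x | f x ≠ 0} ⊆ s) (ht : {y | g y ≠ 0} ⊆ t) :
    {z | cpMul 𝒢 Rf F.M F.τ f g z ≠ 0} ⊆ ((s ×ˢ t).image fun q => 𝒢.mul q.1 q.2 : Finset G) := by
  intro z hz
  by_contra hzD
  refine hz ?_
  rw [cpMul_eq_sum F hs ht, Finset.sum_apply]
  exact Finset.sum_eq_zero fun q hq =>
    cpTerm_eq_zero_of_mul_ne fun hqz => hzD (Finset.mem_image.mpr ⟨q, hq, hqz⟩)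

theorem cpMul_support_finite {f g : (x : G) → Rf (𝒢.r x)}
    (hf : {x | f x ≠ 0}.Finite) (hg : {y | g y ≠ 0}.Finite) :
    {z | cpMul 𝒢 Rf F.M F.τ f g z ≠ 0}.Finite := by
  classical
  exact (Finset.finite_toSet _).subset
    (cpMul_support_subset F hf.coe_toFinset.superset hg.coe_toFinset.superset)

theorem cpMul_add_left {f f' g : (x : G) → Rf (𝒢.r x)} (hf : {x | f x ≠ 0}.Finite)
    (hf' : {x | f' x ≠ 0}.Finite) (hg : {y | g y ≠ 0}.Finite) :
    cpMul 𝒢 Rf F.M F.τ (f + f') g = cpMul 𝒢 Rf F.M F.τ f g + cpMul 𝒢 Rf F.M F.τ f' g := by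
  funext z
  simp only [Pi.add_apply, cpMul_apply_eq_finsum, cpTerm_add_left]
  exact finsum_add_distrib ((hf.prod hg).subset (support_cpTerm_subset F f g z))
    ((hf'.prod hg).subset (support_cpTerm_subset F f' g z))

theorem cpMul_add_right {f g g' : (x : G) → Rf (𝒢.r x)} (hf : {x | f x ≠ 0}.Finite)
    (hg : {y | g y ≠ 0}.Finite) (hg' : {y | g' y ≠ 0}.Finite) :
    cpMul 𝒢 Rf F.M F.τ f (g + g') = cpMul 𝒢 Rf F.M F.τ f g + cpMul 𝒢 Rf F.M F.τ f g' := by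
  funext z
  simp only [Pi.add_apply, cpMul_apply_eq_finsum, cpTerm_add_right]
  exact finsum_add_distrib ((hf.prod hg).subset (support_cpTerm_subset F f g z))
    ((hf.prod hg').subset (support_cpTerm_subset F f g' z))

theorem cpTerm_assoc (f g h : (x : G) → Rf (𝒢.r x)) (x y w z : G) :
    cpTerm F (fun d => cpTerm F f g d (x, y)) h z (𝒢.mul x y, w) =
      cpTerm F f (fun e => cpTerm F g h e (y, w)) z (x, 𝒢.mul y w) := by
  by_cases hyw : 𝒢.s y = 𝒢.r w
  swap
  · have hR : cpTerm F f (fun e => cpTerm F g h e (y, w)) z (x, 𝒢.mul y w) = 0 :=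
      cpTerm_eq_zero_of_right (cpTerm_eq_zero_of_not fun hc => hyw hc.1)
    rw [hR]
    by_cases hxy : 𝒢.s x = 𝒢.r y
    · exact cpTerm_eq_zero_of_not fun hc => hyw ((𝒢.s_mul x y hxy).symm.trans hc.1)
    · exact cpTerm_eq_zero_of_left (cpTerm_eq_zero_of_not fun hc => hxy hc.1)
  by_cases hxy : 𝒢.s x = 𝒢.r y
  swap
  · have hL : cpTerm F (fun d => cpTerm F f g d (x, y)) h z (𝒢.mul x y, w) = 0 :=
      cpTerm_eq_zero_of_left (cpTerm_eq_zero_of_not fun hc => hxy hc.1)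
    rw [hL]
    exact (cpTerm_eq_zero_of_not fun hc => hxy (hc.1.trans (𝒢.r_mul y w hyw))).symm
  have hassoc := 𝒢.assoc x y w hxy hyw
  by_cases hz : 𝒢.mul (𝒢.mul x y) w = z
  swap
  · rw [cpTerm_eq_zero_of_mul_ne hz, cpTerm_eq_zero_of_mul_ne fun hc => hz (hassoc.trans hc)]
  subst hz
  unfold cpTerm
  dsimp only
  rw [dif_pos ⟨(𝒢.s_mul x y hxy).trans hyw, rfl⟩, dif_pos ⟨hxy, rfl⟩,
    dif_pos ⟨hxy.trans (𝒢.r_mul y w hyw).symm, hassoc.symm⟩, dif_pos ⟨hyw, rfl⟩]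
  simp only [tr_self]
  rw [← F.twistedMul_assoc hxy hyw, tr_tr]
  rfl

theorem cpMul_cpMul_apply_eq_sum_left {f g h : (x : G) → Rf (𝒢.r x)} {A B C : Finset G}
    (hA : {x | f x ≠ 0} ⊆ A) (hB : {y | g y ≠ 0} ⊆ B) (hC : {w | h w ≠ 0} ⊆ C) (z : G) :
    cpMul 𝒢 Rf F.M F.τ (cpMul 𝒢 Rf F.M F.τ f g) h z =
      ∑ p ∈ A ×ˢ B, ∑ w ∈ C, cpTerm F (fun d => cpTerm F f g d p) h z (𝒢.mul p.1 p.2, w) := by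
  classical
  rw [cpMul_eq_sum F (cpMul_support_subset F hA hB) hC, Finset.sum_apply, cpMul_eq_sum F hA hB]
  simp only [cpTerm_sum_left]
  rw [Finset.sum_comm]
  refine Finset.sum_congr rfl fun p hp => ?_
  rw [Finset.sum_product_right]
  refine Finset.sum_congr rfl fun w _ => ?_
  exact Finset.sum_eq_single_of_mem _ (Finset.mem_image_of_mem _ hp) fun d _ hd =>
    cpTerm_eq_zero_of_left (cpTerm_eq_zero_of_mul_ne (Ne.symm hd))

theorem cpMul_cpMul_apply_eq_sum_right {f g h : (x : G) → Rf (𝒢.r x)} {A B C : Finset G}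
    (hA : {x | f x ≠ 0} ⊆ A) (hB : {y | g y ≠ 0} ⊆ B) (hC : {w | h w ≠ 0} ⊆ C) (z : G) :
    cpMul 𝒢 Rf F.M F.τ f (cpMul 𝒢 Rf F.M F.τ g h) z =
      ∑ x ∈ A, ∑ p ∈ B ×ˢ C, cpTerm F f (fun e => cpTerm F g h e p) z (x, 𝒢.mul p.1 p.2) := by
  classical
  rw [cpMul_eq_sum F hA (cpMul_support_subset F hB hC), Finset.sum_apply, cpMul_eq_sum F hB hC]
  simp only [cpTerm_sum_right]
  rw [Finset.sum_product]
  refine Finset.sum_congr rfl fun x _ => ?_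
  rw [Finset.sum_comm]
  refine Finset.sum_congr rfl fun p hp => ?_
  exact Finset.sum_eq_single_of_mem _ (Finset.mem_image_of_mem _ hp) fun e _ he =>
    cpTerm_eq_zero_of_right (cpTerm_eq_zero_of_mul_ne (Ne.symm he))

theorem cpMul_assoc {f g h : (x : G) → Rf (𝒢.r x)} (hf : {x | f x ≠ 0}.Finite)
    (hg : {y | g y ≠ 0}.Finite) (hh : {w | h w ≠ 0}.Finite) :
    cpMul 𝒢 Rf F.M F.τ (cpMul 𝒢 Rf F.M F.τ f g) h =
      cpMul 𝒢 Rf F.M F.τ f (cpMul 𝒢 Rf F.M F.τ g h) := by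
  funext z
  have hA := hf.coe_toFinset.superset
  have hB := hg.coe_toFinset.superset
  have hC := hh.coe_toFinset.superset
  rw [cpMul_cpMul_apply_eq_sum_left F hA hB hC, cpMul_cpMul_apply_eq_sum_right F hA hB hC]
  simp only [Finset.sum_product, cpTerm_assoc]

end CrossedProduct

/-- For a factor system `(M,τ)` for `(𝒢,ℛ)`, the set `ℛ ×_(M,τ) 𝒢` of
finitely supported sections `f : 𝒢 → ℛ` with `p ∘ f = r`, with pointwise addition and the
product `(fg)(z) = ∑_{xy=z} f(x) M_x(g(y)) τ(x,y)`, is an associative ring: products of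
finitely supported sections are finitely supported, and the product is associative and
bi-additive. -/
theorem stmt16 {G U : Type} (𝒢 : Gpd G U) (Rf : U → Type) [∀ u, Ring (Rf u)]
    (F : RingFS 𝒢 Rf)
    (f g h : (x : G) → Rf (𝒢.r x))
    (hf : {x | f x ≠ 0}.Finite) (hg : {x | g x ≠ 0}.Finite) (hh : {x | h x ≠ 0}.Finite) :
    -- closure under the product
    {z | cpMul 𝒢 Rf F.M F.τ f g z ≠ 0}.Finite ∧
    -- associativity
    cpMul 𝒢 Rf F.M F.τ (cpMul 𝒢 Rf F.M F.τ f g) h =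
      cpMul 𝒢 Rf F.M F.τ f (cpMul 𝒢 Rf F.M F.τ g h) ∧
    -- distributivity
    cpMul 𝒢 Rf F.M F.τ (fun x => f x + g x) h =
      (fun z => cpMul 𝒢 Rf F.M F.τ f h z + cpMul 𝒢 Rf F.M F.τ g h z) ∧
    cpMul 𝒢 Rf F.M F.τ f (fun x => g x + h x) =
      (fun z => cpMul 𝒢 Rf F.M F.τ f g z + cpMul 𝒢 Rf F.M F.τ f h z) :=
  ⟨cpMul_support_finite F hf hg, cpMul_assoc F hf hg hh, cpMul_add_left F hf hg hh,
    cpMul_add_right F hf hg hh⟩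
end
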